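/- For i ∈ {1,2}, let lp_i be a coherent conditional lower prevision on C_i ⊆ C(X_i) with natural extension E_i to C(X_i), and let 𝔅_i ⊆ P_∅(X_i). Then for all {i,j} = {1,2}, every gamble h on X_j, and every nonnegative 𝔅_i-measurable gamble g on X_i (Factorisation): (lp1⊗lp2)(g·h) = E_i( g·E_j(h) ), and this equals E_i(g)·E_j(h) if E_j(h) ≥ 0 and equals Ē_i(g)·E_j(h) if E_j(h) ≤ 0, where g·h is the gamble (x1,x2) ↦ g(x_i)·h(x_j), E_j(h) := E_j(h|X_j), E_i(·) := E_i(·|X_i), Ē_i(g) := −E_i(−g), and (lp1⊗lp2)(·) abbreviates (lp1⊗lp2)(·|X1×X2). -/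

import Mathlib

open scoped BigOperators

namespace IPaper

variable {X : Type*}

/-- A gamble on `X`: a bounded real-valued function. -/
def IsGamble (f : X → ℝ) : Prop := ∃ M : ℝ, ∀ x, |f x| ≤ M

/-- The indicator gamble of an event. -/
noncomputable def ind (B : Set X) : X → ℝ := Set.indicator B 1

/-- The set `G_{>0}(X)` of nonnegative nonzero gambles. -/
def Gpos (X : Type*) : Set (X → ℝ) := {f | IsGamble f ∧ 0 ≤ f ∧ f ≠ 0}

/-- A coherent set of desirable gambles. -/
structure CoherentSDG (D : Set (X → ℝ)) : Prop where
  subset_gambles : ∀ f ∈ D, IsGamble f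
  d1 : ∀ f : X → ℝ, IsGamble f → 0 ≤ f → f ≠ 0 → f ∈ D
  d2 : ∀ f ∈ D, ∀ l : ℝ, 0 < l → l • f ∈ D
  d3 : ∀ f ∈ D, ∀ g ∈ D, f + g ∈ D
  d4 : ∀ f : X → ℝ, f ≤ 0 → f ∉ D

/-- `posi A`: positive linear hull of `A`. -/
def posi (A : Set (X → ℝ)) : Set (X → ℝ) :=
  {g | ∃ (n : ℕ) (l : Fin (n + 1) → ℝ) (h : Fin (n + 1) → X → ℝ),
    (∀ i, 0 < l i) ∧ (∀ i, h i ∈ A) ∧ g = ∑ i, l i • h i}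

/-- `E(A) := posi (A ∪ G_{>0}(X))`. -/
def natExtSet (A : Set (X → ℝ)) : Set (X → ℝ) := posi (A ∪ Gpos X)

/-- `C(X)`: all pairs of a gamble and a nonempty event. -/
def domC (X : Type*) : Set ((X → ℝ) × Set X) := {p | IsGamble p.1 ∧ p.2.Nonempty}

/-- The conditional lower prevision `lp_D` derived from a set of gambles `D`. -/
noncomputable def lpOf (D : Set (X → ℝ)) (f : X → ℝ) (B : Set X) : EReal :=
  sSup (Real.toEReal '' {m : ℝ | (fun x => (f x - m) * ind B x) ∈ D})

/-- Coherence (Williams) of a conditional lower prevision on a domain `C`. -/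
def Coherent (C : Set ((X → ℝ) × Set X)) (lp : (X → ℝ) → Set X → EReal) : Prop :=
  ∃ D : Set (X → ℝ), CoherentSDG D ∧ ∀ p ∈ C, lp p.1 p.2 = lpOf D p.1 p.2

/-- The set `A_lp`. -/
def Alp (C : Set ((X → ℝ) × Set X)) (lp : (X → ℝ) → Set X → EReal) : Set (X → ℝ) :=
  {g | ∃ p ∈ C, ∃ m : ℝ, (m : EReal) < lp p.1 p.2 ∧ g = fun x => (p.1 x - m) * ind p.2 x}

/-- `E(lp) := E(A_lp)`. -/
def ElpSet (C : Set ((X → ℝ) × Set X)) (lp : (X → ℝ) → Set X → EReal) : Set (X → ℝ) :=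
  natExtSet (Alp C lp)

/-- The natural extension of `lp` to all of `C(X)`. -/
noncomputable def natExtLP (C : Set ((X → ℝ) × Set X)) (lp : (X → ℝ) → Set X → EReal)
    (f : X → ℝ) (B : Set X) : EReal :=
  lpOf (ElpSet C lp) f B

/-- Simple `B`-measurable gamble. -/
def SimpleMeas (Bfam : Set (Set X)) (g : X → ℝ) : Prop :=
  ∃ (c0 : ℝ) (n : ℕ) (c : Fin n → ℝ) (Bs : Fin n → Set X),
    0 ≤ c0 ∧ (∀ i, 0 ≤ c i) ∧ (∀ i, Bs i ∈ Bfam) ∧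
    g = fun x => c0 + ∑ i, c i * ind (Bs i) x

/-- `B`-measurable gamble: uniform limit of nonnegative simple `B`-measurable gambles. -/
def BMeas (Bfam : Set (Set X)) (g : X → ℝ) : Prop :=
  ∃ gs : ℕ → X → ℝ, (∀ n, 0 ≤ gs n ∧ SimpleMeas Bfam (gs n)) ∧
    TendstoUniformly gs g Filter.atTop

/-- A conditional linear prevision on `C(X)`: a coherent self-conjugate conditional
lower prevision on the full domain. -/
def CondLinPrev (P : (X → ℝ) → Set X → EReal) : Prop :=
  Coherent (domC X) P ∧ ∀ p ∈ domC X, P p.1 p.2 = -P (-p.1) p.2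

section Product

variable {X1 X2 : Type*}

/-- `A_{1→2}`. -/
def A12 (D2 : Set (X2 → ℝ)) (F1 : Set (Set X1)) : Set (X1 × X2 → ℝ) :=
  {g | ∃ f2 ∈ D2, ∃ B1 ∈ F1 ∪ {Set.univ}, g = fun p => f2 p.2 * ind B1 p.1}

/-- `A_{2→1}`. -/
def A21 (D1 : Set (X1 → ℝ)) (F2 : Set (Set X2)) : Set (X1 × X2 → ℝ) :=
  {g | ∃ f1 ∈ D1, ∃ B2 ∈ F2 ∪ {Set.univ}, g = fun p => f1 p.1 * ind B2 p.2}

/-- `D1 ⊗ D2`, relative to the families of conditioning events `F1`, `F2`. -/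
def indNatExt (D1 : Set (X1 → ℝ)) (D2 : Set (X2 → ℝ))
    (F1 : Set (Set X1)) (F2 : Set (Set X2)) : Set (X1 × X2 → ℝ) :=
  natExtSet (A12 D2 F1 ∪ A21 D1 F2)

/-- `marg_1(D)`. -/
def marg1 (D : Set (X1 × X2 → ℝ)) : Set (X1 → ℝ) :=
  {f | IsGamble f ∧ (fun p : X1 × X2 => f p.1) ∈ D}

/-- `marg_2(D)`. -/
def marg2 (D : Set (X1 × X2 → ℝ)) : Set (X2 → ℝ) :=
  {f | IsGamble f ∧ (fun p : X1 × X2 => f p.2) ∈ D}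

/-- `marg_1(D|B2)`. -/
def marg1c (D : Set (X1 × X2 → ℝ)) (B2 : Set X2) : Set (X1 → ℝ) :=
  {f | IsGamble f ∧ (fun p : X1 × X2 => f p.1 * ind B2 p.2) ∈ D}

/-- `marg_2(D|B1)`. -/
def marg2c (D : Set (X1 × X2 → ℝ)) (B1 : Set X1) : Set (X2 → ℝ) :=
  {f | IsGamble f ∧ (fun p : X1 × X2 => f p.2 * ind B1 p.1) ∈ D}

/-- Epistemic independence of a set of desirable gambles on `X1 × X2`. -/
def EpIndSDG (F1 : Set (Set X1)) (F2 : Set (Set X2)) (D : Set (X1 × X2 → ℝ)) : Prop :=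
  (∀ B2 ∈ F2, marg1c D B2 = marg1 D) ∧ (∀ B1 ∈ F1, marg2c D B1 = marg2 D)

/-- Independent product (of sets of desirable gambles). -/
def IndProductSDG (F1 : Set (Set X1)) (F2 : Set (Set X2))
    (D1 : Set (X1 → ℝ)) (D2 : Set (X2 → ℝ)) (D : Set (X1 × X2 → ℝ)) : Prop :=
  CoherentSDG D ∧ EpIndSDG F1 F2 D ∧ marg1 D = D1 ∧ marg2 D = D2

/-- The independent natural extension `lp1 ⊗ lp2` on `C(X1 × X2)`. -/
noncomputable def lpProd (C1 : Set ((X1 → ℝ) × Set X1)) (lp1 : (X1 → ℝ) → Set X1 → EReal)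
    (C2 : Set ((X2 → ℝ) × Set X2)) (lp2 : (X2 → ℝ) → Set X2 → EReal)
    (F1 : Set (Set X1)) (F2 : Set (Set X2)) :
    (X1 × X2 → ℝ) → Set (X1 × X2) → EReal :=
  lpOf (indNatExt (ElpSet C1 lp1) (ElpSet C2 lp2) F1 F2)

/-- An independent domain `C ⊆ C(X1 × X2)`. -/
def IndepDomain (F1 : Set (Set X1)) (F2 : Set (Set X2))
    (C : Set ((X1 × X2 → ℝ) × Set (X1 × X2))) : Prop :=
  (∀ (f1 : X1 → ℝ) (B1 : Set X1), IsGamble f1 → B1.Nonempty → ∀ B2 ∈ F2,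
    (((fun p : X1 × X2 => f1 p.1), B1 ×ˢ (Set.univ : Set X2)) ∈ C ↔
      ((fun p : X1 × X2 => f1 p.1), B1 ×ˢ B2) ∈ C)) ∧
  (∀ (f2 : X2 → ℝ) (B2 : Set X2), IsGamble f2 → B2.Nonempty → ∀ B1 ∈ F1,
    (((fun p : X1 × X2 => f2 p.2), (Set.univ : Set X1) ×ˢ B2) ∈ C ↔
      ((fun p : X1 × X2 => f2 p.2), B1 ×ˢ B2) ∈ C))

/-- Epistemic independence of a conditional lower prevision on a domain `C`. -/
def EpIndLP (F1 : Set (Set X1)) (F2 : Set (Set X2))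
    (C : Set ((X1 × X2 → ℝ) × Set (X1 × X2)))
    (lp : (X1 × X2 → ℝ) → Set (X1 × X2) → EReal) : Prop :=
  (∀ (f1 : X1 → ℝ) (B1 : Set X1), IsGamble f1 → B1.Nonempty →
    ((fun p : X1 × X2 => f1 p.1), B1 ×ˢ (Set.univ : Set X2)) ∈ C → ∀ B2 ∈ F2,
    lp (fun p : X1 × X2 => f1 p.1) (B1 ×ˢ (Set.univ : Set X2)) =
      lp (fun p : X1 × X2 => f1 p.1) (B1 ×ˢ B2)) ∧
  (∀ (f2 : X2 → ℝ) (B2 : Set X2), IsGamble f2 → B2.Nonempty →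
    ((fun p : X1 × X2 => f2 p.2), (Set.univ : Set X1) ×ˢ B2) ∈ C → ∀ B1 ∈ F1,
    lp (fun p : X1 × X2 => f2 p.2) ((Set.univ : Set X1) ×ˢ B2) =
      lp (fun p : X1 × X2 => f2 p.2) (B1 ×ˢ B2))

/-- Independent product of two conditional lower previsions, on the joint domain `C`. -/
def IndProductLP (F1 : Set (Set X1)) (F2 : Set (Set X2))
    (C1 : Set ((X1 → ℝ) × Set X1)) (lp1 : (X1 → ℝ) → Set X1 → EReal)
    (C2 : Set ((X2 → ℝ) × Set X2)) (lp2 : (X2 → ℝ) → Set X2 → EReal)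
    (C : Set ((X1 × X2 → ℝ) × Set (X1 × X2)))
    (lp : (X1 × X2 → ℝ) → Set (X1 × X2) → EReal) : Prop :=
  Coherent C lp ∧ EpIndLP F1 F2 C lp ∧
  (∀ p ∈ C1, lp (fun q : X1 × X2 => p.1 q.1) (p.2 ×ˢ (Set.univ : Set X2)) = lp1 p.1 p.2) ∧
  (∀ p ∈ C2, lp (fun q : X1 × X2 => p.1 q.2) ((Set.univ : Set X1) ×ˢ p.2) = lp2 p.1 p.2)

end Product

/-! Write `μ` for the lower prevision of `k` under `E(lp₂)`; both sides reduce to the lower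
prevision of `g · μ` under `E(lp₁)`.

Upper bound: by Hahn–Banach there is a linear functional `P` dominating the lower prevision on
gambles with `P k = μ`. Applying `P` to the `X₂`-sections maps every generator of `D₁ ⊗ D₂`, hence
every element, to a gamble on `X₁` that dominates an element of `D₁ ∪ {0}`; for `g · k - m` that
gamble is `g · μ - m`.

Lower bound: for simple `g = c₀ + ∑ cᵢ 1_{Bᵢ}` and `μ'` slightly below `μ`,
`g · k - m = c₀ (k - μ') + ∑ cᵢ (k - μ') 1_{Bᵢ} + (g μ' - m)` is a nonnegative combination of
generators of `D₁ ⊗ D₂`. Replacing `g` by a uniformly close simple `g'` perturbs `g · k` and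
`g · μ` uniformly by little, which extends this to `𝔅₁`-measurable `g`. -/

section Gambles

variable {X : Type*}

theorem isGamble_const (c : ℝ) : IsGamble (fun _ : X => c) := ⟨|c|, fun _ => le_rfl⟩

theorem IsGamble.add {f g : X → ℝ} (hf : IsGamble f) (hg : IsGamble g) : IsGamble (f + g) := by
  obtain ⟨M, hM⟩ := hf
  obtain ⟨N, hN⟩ := hg
  exact ⟨M + N, fun x => (abs_add_le _ _).trans (add_le_add (hM x) (hN x))⟩

theorem IsGamble.neg {f : X → ℝ} (hf : IsGamble f) : IsGamble (-f) := by
  obtain ⟨M, hM⟩ := hf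
  exact ⟨M, fun x => by simpa using hM x⟩

theorem IsGamble.sub {f g : X → ℝ} (hf : IsGamble f) (hg : IsGamble g) : IsGamble (f - g) := by
  simpa [sub_eq_add_neg] using hf.add hg.neg

theorem IsGamble.mul {f g : X → ℝ} (hf : IsGamble f) (hg : IsGamble g) :
    IsGamble (fun x => f x * g x) := by
  obtain ⟨M, hM⟩ := hf
  obtain ⟨N, hN⟩ := hg
  refine ⟨M * N, fun x => ?_⟩
  rw [abs_mul]
  exact mul_le_mul (hM x) (hN x) (abs_nonneg _) ((abs_nonneg _).trans (hM x))

theorem IsGamble.comp {Y : Type*} {f : X → ℝ} (hf : IsGamble f) (φ : Y → X) :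
    IsGamble (f ∘ φ) := by
  obtain ⟨M, hM⟩ := hf
  exact ⟨M, fun y => hM (φ y)⟩

theorem isGamble_ind (B : Set X) : IsGamble (ind B) :=
  ⟨1, fun x => by by_cases h : x ∈ B <;> simp [ind, h]⟩

theorem ind_nonneg (B : Set X) : 0 ≤ ind B := Set.indicator_nonneg fun _ _ => zero_le_one

theorem ind_univ : ind (Set.univ : Set X) = 1 := Set.indicator_univ 1

variable (X) in
def gambleSubmodule : Submodule ℝ (X → ℝ) where
  carrier := {f | IsGamble f}
  add_mem' hf hg := hf.add hg
  zero_mem' := isGamble_const 0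
  smul_mem' c _ hf := (isGamble_const c).mul hf

theorem isGamble_sum {ι : Type*} (s : Finset ι) {f : ι → X → ℝ} (h : ∀ i ∈ s, IsGamble (f i)) :
    IsGamble (∑ i ∈ s, f i) :=
  (gambleSubmodule X).sum_mem h

theorem SimpleMeas.isGamble {F : Set (Set X)} {g : X → ℝ} (hg : SimpleMeas F g) : IsGamble g := by
  obtain ⟨c0, n, c, B, -, -, -, rfl⟩ := hg
  have hsum := isGamble_sum Finset.univ fun i _ => (isGamble_const (c i)).mul (isGamble_ind (B i))
  convert (isGamble_const c0).add hsum using 1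
  ext x
  simp [Finset.sum_apply]

end Gambles

section Posi

variable {X Y : Type*}

theorem subset_posi (A : Set (X → ℝ)) : A ⊆ posi A :=
  fun a ha => ⟨0, fun _ => 1, fun _ => a, fun _ => one_pos, fun _ => ha, by simp⟩

def posiCone (A : Set (X → ℝ)) : ConvexCone ℝ (X → ℝ) where
  carrier := posi A
  smul_mem' c hc f := by
    rintro ⟨n, l, h, hl, hh, rfl⟩
    refine ⟨n, fun i => c * l i, h, fun i => mul_pos hc (hl i), hh, ?_⟩
    simp only [Finset.smul_sum, smul_smul]
  add_mem' f := by
    rintro ⟨n, l, h, hl, hh, rfl⟩ g ⟨n', l', h', hl', hh', rfl⟩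
    refine ⟨n + 1 + n', (Fin.append l l' : Fin (n + 1 + (n' + 1)) → ℝ),
      (Fin.append h h' : Fin (n + 1 + (n' + 1)) → X → ℝ), fun i : Fin (n + 1 + (n' + 1)) =>
      Fin.addCases (fun j => by simpa using hl j) (fun j => by simpa using hl' j) i,
      fun i : Fin (n + 1 + (n' + 1)) =>
      Fin.addCases (fun j => by simpa using hh j) (fun j => by simpa using hh' j) i, ?_⟩
    have hsum := Fin.sum_univ_add (a := n + 1) (b := n' + 1)
      fun i => Fin.append l l' i • Fin.append h h' i
    simp only [Fin.append_left, Fin.append_right] at hsum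
    exact hsum.symm

theorem posi_subset {A : Set (X → ℝ)} (C : ConvexCone ℝ (X → ℝ)) (hA : A ⊆ C) :
    posi A ⊆ C := by
  rintro f ⟨n, l, h, hl, hh, rfl⟩
  induction n with
  | zero => simpa using C.smul_mem (hl 0) (hA (hh 0))
  | succ n ih =>
    rw [Fin.sum_univ_castSucc]
    exact C.add_mem (ih _ _ (fun i => hl _) fun i => hh _) (C.smul_mem (hl _) (hA (hh _)))

theorem comp_mem_posi {A : Set (X → ℝ)} {B : Set (Y → ℝ)} (e : Y → X)
    (hAB : ∀ a ∈ A, a ∘ e ∈ B) {f : X → ℝ} (hf : f ∈ posi A) : f ∘ e ∈ posi B := by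
  obtain ⟨n, l, h, hl, hh, rfl⟩ := hf
  refine ⟨n, l, fun i => h i ∘ e, hl, fun i => hAB _ (hh i), ?_⟩
  ext y
  simp [Finset.sum_apply]

theorem mem_of_le_of_Gpos_subset (C : ConvexCone ℝ (X → ℝ)) (hC : Gpos X ⊆ C)
    {f f' : X → ℝ} (hf : f ∈ C) (hfg : IsGamble f) (hf'g : IsGamble f') (hle : f ≤ f') :
    f' ∈ C := by
  by_cases heq : f' - f = 0
  · rwa [sub_eq_zero.mp heq]
  · simpa using C.add_mem hf (hC ⟨hf'g.sub hfg, sub_nonneg.mpr hle, heq⟩)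

theorem mem_natExtSet_of_le {A : Set (X → ℝ)} {f f' : X → ℝ} (hf : f ∈ natExtSet A)
    (hfg : IsGamble f) (hf'g : IsGamble f') (hle : f ≤ f') : f' ∈ natExtSet A :=
  mem_of_le_of_Gpos_subset (posiCone _) (fun _ h => subset_posi _ (Or.inr h)) hf hfg hf'g hle

end Posi

section PointedCone

variable {M : Type*} [AddCommGroup M] [Module ℝ M]

theorem add_mem_insert_zero (C : ConvexCone ℝ M) {a b : M} (ha : a ∈ insert 0 (C : Set M))
    (hb : b ∈ insert 0 (C : Set M)) : a + b ∈ insert 0 (C : Set M) := by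
  rcases ha with rfl | ha
  · simpa using hb
  rcases hb with rfl | hb
  · simpa using Or.inr ha
  exact Or.inr (C.add_mem ha hb)

theorem smul_mem_insert_zero (C : ConvexCone ℝ M) {c : ℝ} (hc : 0 ≤ c) {a : M}
    (ha : a ∈ insert 0 (C : Set M)) : c • a ∈ insert 0 (C : Set M) := by
  rcases hc.eq_or_lt with rfl | hc
  · simp
  rcases ha with rfl | ha
  · simp
  exact Or.inr (C.smul_mem hc ha)

theorem add_mem_of_mem_insert_zero (C : ConvexCone ℝ M) {a b : M} (ha : a ∈ C)
    (hb : b ∈ insert 0 (C : Set M)) : a + b ∈ C := by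
  rcases hb with rfl | hb
  · simpa using ha
  exact C.add_mem ha hb

def upperClosureCone [PartialOrder M] [IsOrderedAddMonoid M] [PosSMulMono ℝ M]
    (C : ConvexCone ℝ M) : ConvexCone ℝ M where
  carrier := upperClosure (insert 0 (C : Set M))
  smul_mem' c hc x := by
    rintro ⟨q, hq, hqx⟩
    exact ⟨c • q, smul_mem_insert_zero C hc.le hq, smul_le_smul_of_nonneg_left hqx hc.le⟩
  add_mem' x := by
    rintro ⟨q, hq, hqx⟩ y ⟨q', hq', hqy⟩
    exact ⟨q + q', add_mem_insert_zero C hq hq', add_le_add hqx hqy⟩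

end PointedCone

section LowerPrevision

open scoped Pointwise

variable {X : Type*} {D : Set (X → ℝ)}

def CoherentSDG.toConvexCone (hD : CoherentSDG D) : ConvexCone ℝ (X → ℝ) where
  carrier := D
  smul_mem' _ hc f hf := hD.d2 f hf _ hc
  add_mem' f hf g hg := hD.d3 f hf g hg

theorem CoherentSDG.mem_of_le (hD : CoherentSDG D) {f f' : X → ℝ} (hf : f ∈ D)
    (hf' : IsGamble f') (hle : f ≤ f') : f' ∈ D :=
  mem_of_le_of_Gpos_subset hD.toConvexCone (fun g hg => hD.d1 g hg.1 hg.2.1 hg.2.2) hf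
    (hD.subset_gambles f hf) hf' hle

theorem CoherentSDG.const_mem_iff [Nonempty X] (hD : CoherentSDG D) {c : ℝ} :
    (fun _ : X => c) ∈ D ↔ 0 < c := by
  refine ⟨fun h => not_le.mp fun hc => hD.d4 _ (fun _ => hc) h, fun hc => ?_⟩
  refine hD.d1 _ (isGamble_const c) (fun _ => hc.le) fun h0 => hc.ne' ?_
  exact congrFun h0 (Classical.arbitrary X)

def buyingPrices (D : Set (X → ℝ)) (f : X → ℝ) : Set ℝ := {m | (fun x => f x - m) ∈ D}

noncomputable def lowerPrev (D : Set (X → ℝ)) (f : X → ℝ) : ℝ := sSup (buyingPrices D f)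

theorem lpOf_univ (D : Set (X → ℝ)) (f : X → ℝ) :
    lpOf D f Set.univ = sSup (Real.toEReal '' buyingPrices D f) := by
  simp [lpOf, buyingPrices, ind_univ]

theorem lpOf_univ_of_isLUB {f : X → ℝ} {r : ℝ} (h : IsLUB (buyingPrices D f) r) :
    lpOf D f Set.univ = r := by
  rw [lpOf_univ, ← h.csSup_eq h.nonempty]
  exact (Monotone.map_csSup_of_continuousAt continuous_coe_real_ereal.continuousAt
    EReal.coe_strictMono.monotone h.nonempty h.bddAbove).symm

theorem buyingPrices_smul (hD : CoherentSDG D) {f : X → ℝ} {c : ℝ} (hc : 0 < c) :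
    buyingPrices D (c • f) = c • buyingPrices D f := by
  ext m
  rw [Set.mem_smul_set_iff_inv_smul_mem₀ hc.ne']
  simp only [buyingPrices, Set.mem_ofPred_eq, Pi.smul_apply, smul_eq_mul]
  have hscale : (fun x => c * f x - m) = c • fun x => f x - c⁻¹ * m := by
    ext x
    simp [mul_sub, hc.ne']
  rw [hscale]
  exact hD.toConvexCone.smul_mem_iff hc

theorem lowerPrev_smul (hD : CoherentSDG D) (f : X → ℝ) {c : ℝ} (hc : 0 < c) :
    lowerPrev D (c • f) = c * lowerPrev D f := by
  rw [lowerPrev, buyingPrices_smul hD hc, Real.sSup_smul_of_nonneg hc.le]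
  rfl

theorem lowerPrev_const [Nonempty X] (hD : CoherentSDG D) (c : ℝ) :
    lowerPrev D (fun _ => c) = c := by
  have hprices : buyingPrices D (fun _ : X => c) = Set.Iio c := by
    ext m
    simp [buyingPrices, hD.const_mem_iff]
  rw [lowerPrev, hprices, csSup_Iio]

theorem lowerPrev_mul_const_of_nonneg [Nonempty X] (hD : CoherentSDG D) (f : X → ℝ) {c : ℝ}
    (hc : 0 ≤ c) : lowerPrev D (fun x => f x * c) = lowerPrev D f * c := by
  rcases hc.eq_or_lt with rfl | hc
  · simpa using lowerPrev_const hD 0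
  · have hsmul : (fun x => f x * c) = c • f := by
      ext x
      simp [mul_comm]
    rw [hsmul, lowerPrev_smul hD f hc, mul_comm]

theorem lowerPrev_mul_const_of_nonpos [Nonempty X] (hD : CoherentSDG D) (f : X → ℝ) {c : ℝ}
    (hc : c ≤ 0) : lowerPrev D (fun x => f x * c) = -lowerPrev D (-f) * c := by
  simpa using lowerPrev_mul_const_of_nonneg hD (-f) (neg_nonneg.mpr hc)

variable (hD : CoherentSDG D) {f f' : X → ℝ} (hf : IsGamble f)
include hD hf

theorem bddAbove_buyingPrices : BddAbove (buyingPrices D f) := by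
  obtain ⟨M, hM⟩ := hf
  refine ⟨M, fun m hm => not_lt.mp fun hMm => hD.d4 _ (fun x => ?_) hm⟩
  show f x - m ≤ 0
  linarith [(abs_le.mp (hM x)).2]

theorem buyingPrices_nonempty [Nonempty X] : (buyingPrices D f).Nonempty := by
  obtain ⟨M, hM⟩ := id hf
  refine ⟨-M - 1, hD.mem_of_le (hD.const_mem_iff.mpr one_pos) (hf.sub (isGamble_const _))
    fun x => ?_⟩
  linarith [(abs_le.mp (hM x)).1]

theorem isLUB_lowerPrev [Nonempty X] : IsLUB (buyingPrices D f) (lowerPrev D f) :=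
  isLUB_csSup (buyingPrices_nonempty hD hf) (bddAbove_buyingPrices hD hf)

theorem mem_buyingPrices_of_lt [Nonempty X] {m : ℝ} (hm : m < lowerPrev D f) :
    m ∈ buyingPrices D f := by
  obtain ⟨m', hm', hmm'⟩ := exists_lt_of_lt_csSup (buyingPrices_nonempty hD hf) hm
  refine hD.mem_of_le hm' (hf.sub (isGamble_const m)) fun x => ?_
  show f x - m' ≤ f x - m
  linarith

theorem le_lowerPrev_of_forall_lt {r : ℝ} (h : ∀ m < r, m ∈ buyingPrices D f) :
    r ≤ lowerPrev D f :=
  le_of_forall_lt fun _ hc =>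
    let ⟨c', hcc', hc'⟩ := exists_between hc
    hcc'.trans_le (le_csSup (bddAbove_buyingPrices hD hf) (h c' hc'))

theorem lowerPrev_sub_le [Nonempty X] {c : ℝ} (hf' : IsGamble f') (h : ∀ x, f x ≤ f' x + c) :
    lowerPrev D f - c ≤ lowerPrev D f' := by
  refine le_lowerPrev_of_forall_lt hD hf' fun m hm => ?_
  refine hD.mem_of_le (mem_buyingPrices_of_lt hD hf (lt_sub_iff_add_lt.mp hm))
    (hf'.sub (isGamble_const m)) fun x => ?_
  show f x - (m + c) ≤ f' x - m
  linarith [h x]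

theorem lowerPrev_nonneg [Nonempty X] (h0 : 0 ≤ f) : 0 ≤ lowerPrev D f := by
  simpa [lowerPrev_const hD] using
    lowerPrev_sub_le hD (isGamble_const 0) hf (c := 0) fun x => by simpa using h0 x

theorem lowerPrev_add_le [Nonempty X] {g : X → ℝ} (hg : IsGamble g) :
    lowerPrev D f + lowerPrev D g ≤ lowerPrev D (f + g) := by
  refine le_lowerPrev_of_forall_lt hD (hf.add hg) fun m hm => ?_
  set δ := (lowerPrev D f + lowerPrev D g - m) / 2 with hδ
  have hmf := mem_buyingPrices_of_lt hD hf (show lowerPrev D f - δ < lowerPrev D f by linarith [hδ])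
  have hmg := mem_buyingPrices_of_lt hD hg
    (show m - (lowerPrev D f - δ) < lowerPrev D g by linarith [hδ])
  show (fun x => (f + g) x - m) ∈ D
  convert hD.d3 _ hmf _ hmg using 1
  ext x
  simp only [Pi.add_apply]
  ring

omit hf in
theorem lowerPrev_nonneg_of_mem [Nonempty X] (hfD : f ∈ D) : 0 ≤ lowerPrev D f := by
  refine le_lowerPrev_of_forall_lt hD (hD.subset_gambles f hfD) fun m hm => ?_
  refine hD.mem_of_le hfD ((hD.subset_gambles f hfD).sub (isGamble_const m)) fun x => ?_
  show f x ≤ f x - m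
  linarith

end LowerPrevision

section NaturalExtension

variable {X : Type*} {C : Set ((X → ℝ) × Set X)} {lp : (X → ℝ) → Set X → EReal}

theorem coherentSDG_natExtSet {A D : Set (X → ℝ)} (hA : ∀ a ∈ A, IsGamble a)
    (hD : CoherentSDG D) (hAD : A ⊆ D) : CoherentSDG (natExtSet A) where
  subset_gambles := posi_subset (gambleSubmodule X).toConvexCone fun a ha =>
    ha.elim (hA a) fun ha => ha.1
  d1 _ hf h0 hne := subset_posi _ (Or.inr ⟨hf, h0, hne⟩)
  d2 _ hf _ hl := (posiCone _).smul_mem hl hf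
  d3 _ hf _ hg := (posiCone _).add_mem hf hg
  d4 f hf hfD := hD.d4 f hf <| posi_subset hD.toConvexCone
    (fun a ha => ha.elim (fun ha => hAD ha) fun ha => hD.d1 a ha.1 ha.2.1 ha.2.2) hfD

theorem isGamble_of_mem_Alp (hC : C ⊆ domC X) {a : X → ℝ} (ha : a ∈ Alp C lp) : IsGamble a := by
  obtain ⟨p, hp, m, -, rfl⟩ := ha
  exact ((hC hp).1.sub (isGamble_const m)).mul (isGamble_ind p.2)

theorem Alp_subset {D : Set (X → ℝ)} (hC : C ⊆ domC X) (hD : CoherentSDG D)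
    (hlp : ∀ p ∈ C, lp p.1 p.2 = lpOf D p.1 p.2) : Alp C lp ⊆ D := by
  rintro a ha
  obtain ⟨p, hp, m, hm, rfl⟩ := id ha
  rw [hlp p hp, lpOf, lt_sSup_iff] at hm
  obtain ⟨_, ⟨m', hm'D, rfl⟩, hmm'⟩ := hm
  refine hD.mem_of_le hm'D (isGamble_of_mem_Alp hC ha) fun x => ?_
  have hmm'' : m ≤ m' := (EReal.coe_lt_coe_iff.mp hmm').le
  exact mul_le_mul_of_nonneg_right (by linarith) (ind_nonneg p.2 x)

theorem coherentSDG_ElpSet (hC : C ⊆ domC X) (hlp : Coherent C lp) :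
    CoherentSDG (ElpSet C lp) :=
  let ⟨_, hD, hlpD⟩ := hlp
  coherentSDG_natExtSet (fun _ => isGamble_of_mem_Alp hC) hD (Alp_subset hC hD hlpD)

theorem natExtLP_univ [Nonempty X] (hC : C ⊆ domC X) (hlp : Coherent C lp) {f : X → ℝ}
    (hf : IsGamble f) : natExtLP C lp f Set.univ = lowerPrev (ElpSet C lp) f :=
  lpOf_univ_of_isLUB (isLUB_lowerPrev (coherentSDG_ElpSet hC hlp) hf)

end NaturalExtension

section LinearPrevision

theorem exists_linearMap_le_of_sublinear {E : Type*} [AddCommGroup E] [Module ℝ E] (N : E → ℝ)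
    (N_hom : ∀ c : ℝ, 0 < c → ∀ x, N (c • x) = c * N x) (N_add : ∀ x y, N (x + y) ≤ N x + N y)
    (x : E) : ∃ f : E →ₗ[ℝ] ℝ, (∀ y, f y ≤ N y) ∧ f x = N x := by
  have N_zero : N 0 = 0 := by
    have := N_hom 2 two_pos 0
    rw [smul_zero] at this
    linarith
  let p : E →ₗ.[ℝ] ℝ := LinearPMap.mkSpanSingleton' (σ := RingHom.id ℝ) x (N x) fun c hc => by
    rcases smul_eq_zero.mp hc with rfl | rfl
    · simp
    · simp [N_zero]
  have hp : ∀ y : p.domain, p y ≤ N y := by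
    rintro ⟨y, hy⟩
    obtain ⟨c, rfl⟩ := Submodule.mem_span_singleton.mp hy
    rw [LinearPMap.mkSpanSingleton'_apply, RingHom.id_apply, smul_eq_mul]
    rcases lt_trichotomy c 0 with hc | rfl | hc
    · have := N_add (c • x) ((-c) • x)
      rw [← add_smul, add_neg_cancel, zero_smul, N_zero, N_hom _ (neg_pos.mpr hc)] at this
      linarith
    · simp [N_zero]
    · rw [N_hom c hc]
  obtain ⟨f, hfp, hfN⟩ := exists_extension_of_le_sublinear p N N_hom N_add hp
  refine ⟨f, hfN, ?_⟩
  rw [hfp ⟨x, Submodule.mem_span_singleton_self x⟩]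
  exact LinearPMap.mkSpanSingleton'_apply_self _ _ _ _

variable {X : Type*} {D : Set (X → ℝ)}

theorem exists_linearMap_lowerPrev_le [Nonempty X] (hD : CoherentSDG D) {k : X → ℝ}
    (hk : IsGamble k) :
    ∃ P : (X → ℝ) →ₗ[ℝ] ℝ, (∀ f, IsGamble f → lowerPrev D f ≤ P f) ∧ P k = lowerPrev D k := by
  obtain ⟨P₀, hP₀, hP₀k⟩ := exists_linearMap_le_of_sublinear
    (fun f : gambleSubmodule X => -lowerPrev D (-(f : X → ℝ)))
    (fun c hc f => by simp [← smul_neg, lowerPrev_smul hD _ hc])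
    (fun f g => by
      have := lowerPrev_add_le hD (f.2 : IsGamble _).neg (g.2 : IsGamble _).neg
      simp only [Submodule.coe_add, neg_add]
      linarith)
    (-⟨k, hk⟩)
  obtain ⟨P, hP⟩ := LinearMap.exists_extend P₀
  have hPP₀ : ∀ f (hf : IsGamble f), P f = P₀ ⟨f, hf⟩ := fun f hf => LinearMap.congr_fun hP ⟨f, hf⟩
  refine ⟨P, fun f hf => ?_, ?_⟩
  · have := hP₀ (-⟨f, hf⟩)
    simp only [map_neg, Submodule.coe_neg, neg_neg] at this
    rw [hPP₀ f hf]
    linarith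
  · simp only [map_neg, Submodule.coe_neg, neg_neg, neg_inj] at hP₀k
    rw [hPP₀ k hk, hP₀k]

theorem map_const_of_lowerPrev_le [Nonempty X] (hD : CoherentSDG D) {P : (X → ℝ) →ₗ[ℝ] ℝ}
    (hP : ∀ f, IsGamble f → lowerPrev D f ≤ P f) (c : ℝ) : P (fun _ => c) = c := by
  have hc := hP _ (isGamble_const c)
  have hnegc := hP _ (isGamble_const (-c))
  rw [lowerPrev_const hD] at hc hnegc
  have : P (fun _ => -c) = -P (fun _ => c) := by
    rw [← map_neg]
    rfl
  linarith

end LinearPrevision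

section IndependentProduct

variable {X1 X2 : Type*} {D1 : Set (X1 → ℝ)} {D2 : Set (X2 → ℝ)}
  {F1 : Set (Set X1)} {F2 : Set (Set X2)}

def sliceMap (P : (X2 → ℝ) →ₗ[ℝ] ℝ) : (X1 × X2 → ℝ) →ₗ[ℝ] (X1 → ℝ) :=
  LinearMap.pi fun x1 => P ∘ₗ LinearMap.funLeft ℝ ℝ (Prod.mk x1)

theorem sliceMap_apply (P : (X2 → ℝ) →ₗ[ℝ] ℝ) (h : X1 × X2 → ℝ) (x1 : X1) :
    sliceMap P h x1 = P fun x2 => h (x1, x2) :=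
  rfl

theorem sliceMap_mem_upperClosure [Nonempty X2] (hD1 : CoherentSDG D1) (hD2 : CoherentSDG D2)
    {P : (X2 → ℝ) →ₗ[ℝ] ℝ} (hP : ∀ f, IsGamble f → lowerPrev D2 f ≤ P f) {h : X1 × X2 → ℝ}
    (hh : h ∈ indNatExt D1 D2 F1 F2) : sliceMap P h ∈ upperClosure (insert 0 D1) := by
  have hP_nonneg : ∀ f, IsGamble f → 0 ≤ f → 0 ≤ P f := fun f hf h0 =>
    (lowerPrev_nonneg hD2 hf h0).trans (hP f hf)
  refine posi_subset ((upperClosureCone hD1.toConvexCone).comap (sliceMap P)) ?_ hh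
  rintro a ((⟨f2, hf2, B1, -, rfl⟩ | ⟨f1, hf1, B2, -, rfl⟩) | ⟨ha, ha0, -⟩)
  · refine ⟨0, Or.inl rfl, fun x1 => ?_⟩
    have hslice : (fun x2 => f2 x2 * ind B1 x1) = ind B1 x1 • f2 := by
      ext x2
      simp [mul_comm]
    show 0 ≤ P fun x2 => f2 x2 * ind B1 x1
    rw [hslice, map_smul, smul_eq_mul]
    exact mul_nonneg (ind_nonneg B1 x1)
      ((lowerPrev_nonneg_of_mem hD2 hf2).trans (hP f2 (hD2.subset_gambles f2 hf2)))
  · refine ⟨P (ind B2) • f1, smul_mem_insert_zero hD1.toConvexCone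
      (hP_nonneg _ (isGamble_ind B2) (ind_nonneg B2)) (Or.inr hf1), fun x1 => le_of_eq ?_⟩
    show P (ind B2) * f1 x1 = P fun x2 => f1 x1 * ind B2 x2
    rw [mul_comm, ← smul_eq_mul, ← map_smul]
    rfl
  · exact ⟨0, Or.inl rfl, fun x1 => hP_nonneg _ (ha.comp _) fun x2 => ha0 _⟩

variable [Nonempty X1] [Nonempty X2] (hD1 : CoherentSDG D1) (hD2 : CoherentSDG D2)
  {g : X1 → ℝ} {k : X2 → ℝ} (hk : IsGamble k)
include hD1 hD2 hk

theorem le_lowerPrev_of_mem_buyingPrices_indNatExt (hg : IsGamble g) {m : ℝ}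
    (hm : m ∈ buyingPrices (indNatExt D1 D2 F1 F2) fun p => g p.1 * k p.2) :
    m ≤ lowerPrev D1 fun x1 => g x1 * lowerPrev D2 k := by
  obtain ⟨P, hP, hPk⟩ := exists_linearMap_lowerPrev_le hD2 hk
  obtain ⟨q, hq, hqle⟩ := sliceMap_mem_upperClosure hD1 hD2 hP hm
  have hslice : sliceMap P (fun p => g p.1 * k p.2 - m) = fun x1 => g x1 * lowerPrev D2 k - m := by
    ext x1
    have : (fun x2 => g x1 * k x2 - m) = g x1 • k - fun _ => m := rfl
    rw [sliceMap_apply, this, map_sub, map_smul, hPk, map_const_of_lowerPrev_le hD2 hP,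
      smul_eq_mul]
  rw [hslice] at hqle
  have hgμ := hg.mul (isGamble_const (lowerPrev D2 k))
  refine le_lowerPrev_of_forall_lt hD1 hgμ fun m' hm' => ?_
  refine hD1.mem_of_le (add_mem_of_mem_insert_zero hD1.toConvexCone
    (hD1.const_mem_iff.mpr (sub_pos.mpr hm')) hq) (hgμ.sub (isGamble_const m')) fun x1 => ?_
  have := hqle x1
  simp only [Pi.add_apply]
  linarith

theorem mem_buyingPrices_indNatExt_of_simpleMeas (hg : SimpleMeas F1 g) {m : ℝ}
    (hm : m < lowerPrev D1 fun x1 => g x1 * lowerPrev D2 k) :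
    m ∈ buyingPrices (indNatExt D1 D2 F1 F2) fun p => g p.1 * k p.2 := by
  set μ := lowerPrev D2 k
  obtain ⟨Mg, hMg⟩ := id hg.isGamble
  set η := ((lowerPrev D1 fun x1 => g x1 * μ) - m) / (|Mg| + 1) with hη_def
  have hη : 0 < η := div_pos (by linarith) (by positivity)
  have hηMg : η * |Mg| < (lowerPrev D1 fun x1 => g x1 * μ) - m := by
    rw [hη_def, div_mul_eq_mul_div, div_lt_iff₀ (by positivity)]
    nlinarith [abs_nonneg Mg]
  have hlower : (lowerPrev D1 fun x1 => g x1 * μ) - η * |Mg| ≤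
      lowerPrev D1 fun x1 => g x1 * (μ - η) := by
    refine lowerPrev_sub_le hD1 (hg.isGamble.mul (isGamble_const μ))
      (hg.isGamble.mul (isGamble_const _)) fun x1 => ?_
    have : g x1 * η ≤ |Mg| * η :=
      mul_le_mul_of_nonneg_right ((le_abs_self _).trans ((hMg x1).trans (le_abs_self _))) hη.le
    linarith
  have hw : (fun x1 => g x1 * (μ - η) - m) ∈ D1 :=
    mem_buyingPrices_of_lt hD1 (hg.isGamble.mul (isGamble_const _)) (by linarith)
  have hkη : (fun x2 => k x2 - (μ - η)) ∈ D2 := mem_buyingPrices_of_lt hD2 hk (by linarith)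
  obtain ⟨c0, n, c, B, hc0, hc, hB, hg_eq⟩ := hg
  let D := posiCone (A12 D2 F1 ∪ A21 D1 F2 ∪ Gpos (X1 × X2))
  let a : Set X1 → X1 × X2 → ℝ := fun B p => (k p.2 - (μ - η)) * ind B p.1
  have ha : ∀ B ∈ F1 ∪ {Set.univ}, a B ∈ D := fun B hB =>
    subset_posi _ (Or.inl (Or.inl ⟨_, hkη, B, hB, rfl⟩))
  have hsum : c0 • a Set.univ + ∑ i, c i • a (B i) ∈ insert 0 (D : Set _) :=
    add_mem_insert_zero D (smul_mem_insert_zero D hc0 (Or.inr (ha _ (Or.inr rfl))))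
      (Finset.sum_induction (fun i => c i • a (B i)) (· ∈ insert 0 (D : Set (X1 × X2 → ℝ)))
        (fun _ _ => add_mem_insert_zero D)
        (Or.inl rfl) fun i _ => smul_mem_insert_zero D (hc i) (Or.inr (ha _ (Or.inl (hB i)))))
  have hwD : (fun p : X1 × X2 => (g p.1 * (μ - η) - m) * ind Set.univ p.2) ∈ D :=
    subset_posi _ (Or.inl (Or.inr ⟨_, hw, Set.univ, Or.inr rfl, rfl⟩))
  show (fun p => g p.1 * k p.2 - m) ∈ D
  convert add_mem_of_mem_insert_zero D hwD hsum using 1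
  ext p
  simp only [a, ind_univ, Pi.add_apply, Pi.smul_apply, Finset.sum_apply, smul_eq_mul,
    Pi.one_apply, mul_one, hg_eq]
  rw [Finset.sum_congr rfl fun i _ => mul_left_comm (c i) _ _, ← Finset.mul_sum]
  ring

theorem mem_buyingPrices_indNatExt_of_bMeas (hg : IsGamble g) (hgm : BMeas F1 g) {m : ℝ}
    (hm : m < lowerPrev D1 fun x1 => g x1 * lowerPrev D2 k) :
    m ∈ buyingPrices (indNatExt D1 D2 F1 F2) fun p => g p.1 * k p.2 := by
  set μ := lowerPrev D2 k
  obtain ⟨gs, hgs, hlim⟩ := hgm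
  obtain ⟨Mk, hMk⟩ := id hk
  set ε := ((lowerPrev D1 fun x1 => g x1 * μ) - m) / (|μ| + |Mk| + 1) with hε_def
  have hε : 0 < ε := div_pos (by linarith) (by positivity)
  have hεμk : ε * (|μ| + |Mk|) < (lowerPrev D1 fun x1 => g x1 * μ) - m := by
    rw [hε_def, div_mul_eq_mul_div, div_lt_iff₀ (by positivity)]
    nlinarith [abs_nonneg μ, abs_nonneg Mk]
  obtain ⟨n, hn⟩ := (Metric.tendstoUniformly_iff.mp hlim ε hε).exists
  have hclose : ∀ x, |g x - gs n x| < ε := fun x => by simpa [Real.dist_eq] using hn x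
  have hgs_gamble := (hgs n).2.isGamble
  have hlower : (lowerPrev D1 fun x1 => g x1 * μ) - ε * |μ| ≤
      lowerPrev D1 fun x1 => gs n x1 * μ := by
    refine lowerPrev_sub_le hD1 (hg.mul (isGamble_const μ)) (hgs_gamble.mul (isGamble_const μ))
      fun x1 => ?_
    have : (g x1 - gs n x1) * μ ≤ ε * |μ| := by
      calc (g x1 - gs n x1) * μ ≤ |g x1 - gs n x1| * |μ| := by
            rw [← abs_mul]; exact le_abs_self _
        _ ≤ ε * |μ| := mul_le_mul_of_nonneg_right (hclose x1).le (abs_nonneg μ)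
    linarith
  have hsimple := mem_buyingPrices_indNatExt_of_simpleMeas (F2 := F2) hD1 hD2 hk (hgs n).2
    (m := m + ε * |Mk|) (by linarith)
  refine mem_natExtSet_of_le hsimple
    (((hgs_gamble.comp Prod.fst).mul (hk.comp Prod.snd)).sub (isGamble_const _))
    (((hg.comp Prod.fst).mul (hk.comp Prod.snd)).sub (isGamble_const _)) fun p => ?_
  have : |(g p.1 - gs n p.1) * k p.2| ≤ ε * |Mk| := by
    rw [abs_mul]
    exact mul_le_mul (hclose p.1).le ((hMk p.2).trans (le_abs_self Mk)) (abs_nonneg _) hε.le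
  show gs n p.1 * k p.2 - (m + ε * |Mk|) ≤ g p.1 * k p.2 - m
  nlinarith [neg_abs_le ((g p.1 - gs n p.1) * k p.2)]

theorem isLUB_buyingPrices_indNatExt (hg : IsGamble g) (hgm : BMeas F1 g) :
    IsLUB (buyingPrices (indNatExt D1 D2 F1 F2) fun p => g p.1 * k p.2)
      (lowerPrev D1 fun x1 => g x1 * lowerPrev D2 k) :=
  isLUB_Iio.of_subset_of_superset isLUB_Iic
    (fun _ hm => mem_buyingPrices_indNatExt_of_bMeas hD1 hD2 hk hg hgm hm)
    fun _ hm => le_lowerPrev_of_mem_buyingPrices_indNatExt hD1 hD2 hk hg hm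

end IndependentProduct

section Factorisation

variable {X1 X2 : Type*}
  {C1 : Set ((X1 → ℝ) × Set X1)} {lp1 : (X1 → ℝ) → Set X1 → EReal}
  {C2 : Set ((X2 → ℝ) × Set X2)} {lp2 : (X2 → ℝ) → Set X2 → EReal}

theorem comp_swap_mem_indNatExt {D1 : Set (X1 → ℝ)} {D2 : Set (X2 → ℝ)} {F1 : Set (Set X1)}
    {F2 : Set (Set X2)} {h : X1 × X2 → ℝ} (hh : h ∈ indNatExt D1 D2 F1 F2) :
    h ∘ Prod.swap ∈ indNatExt D2 D1 F2 F1 := by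
  refine comp_mem_posi Prod.swap ?_ hh
  rintro a ((⟨f2, hf2, B1, hB1, rfl⟩ | ⟨f1, hf1, B2, hB2, rfl⟩) | ⟨ha, ha0, hne⟩)
  · exact Or.inl (Or.inr ⟨f2, hf2, B1, hB1, rfl⟩)
  · exact Or.inl (Or.inl ⟨f1, hf1, B2, hB2, rfl⟩)
  · refine Or.inr ⟨ha.comp _, fun q => ha0 _, fun h0 => hne ?_⟩
    ext p
    simpa using congrFun h0 p.swap

theorem lpProd_comp_swap (F1 : Set (Set X1)) (F2 : Set (Set X2)) (f : X1 × X2 → ℝ) :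
    lpProd C2 lp2 C1 lp1 F2 F1 (f ∘ Prod.swap) Set.univ =
      lpProd C1 lp1 C2 lp2 F1 F2 f Set.univ := by
  have hprices : buyingPrices (indNatExt (ElpSet C2 lp2) (ElpSet C1 lp1) F2 F1) (f ∘ Prod.swap) =
      buyingPrices (indNatExt (ElpSet C1 lp1) (ElpSet C2 lp2) F1 F2) f := by
    ext m
    exact ⟨comp_swap_mem_indNatExt, comp_swap_mem_indNatExt⟩
  rw [lpProd, lpProd, lpOf_univ, lpOf_univ, hprices]

variable [Nonempty X1] [Nonempty X2] (hC1 : C1 ⊆ domC X1) (hlp1 : Coherent C1 lp1)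
  (hC2 : C2 ⊆ domC X2) (hlp2 : Coherent C2 lp2)
include hC1 hlp1 hC2 hlp2

theorem lpProd_mul_univ (F1 : Set (Set X1)) (F2 : Set (Set X2)) {g : X1 → ℝ} {k : X2 → ℝ}
    (hk : IsGamble k) (hg : IsGamble g) (hgm : BMeas F1 g) :
    lpProd C1 lp1 C2 lp2 F1 F2 (fun p => g p.1 * k p.2) Set.univ =
      lowerPrev (ElpSet C1 lp1) fun x1 => g x1 * lowerPrev (ElpSet C2 lp2) k :=
  lpOf_univ_of_isLUB (isLUB_buyingPrices_indNatExt (coherentSDG_ElpSet hC1 hlp1)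
    (coherentSDG_ElpSet hC2 hlp2) hk hg hgm)

theorem lpProd_mul_factorisation (F1 : Set (Set X1)) (F2 : Set (Set X2)) {g : X1 → ℝ}
    {k : X2 → ℝ} (hk : IsGamble k) (hg : IsGamble g) (hgm : BMeas F1 g) :
    lpProd C1 lp1 C2 lp2 F1 F2 (fun p => g p.1 * k p.2) Set.univ =
        natExtLP C1 lp1 (fun x1 => g x1 * (natExtLP C2 lp2 k Set.univ).toReal) Set.univ ∧
      (0 ≤ natExtLP C2 lp2 k Set.univ →
        lpProd C1 lp1 C2 lp2 F1 F2 (fun p => g p.1 * k p.2) Set.univ =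
          (((natExtLP C1 lp1 g Set.univ).toReal *
            (natExtLP C2 lp2 k Set.univ).toReal : ℝ) : EReal)) ∧
      (natExtLP C2 lp2 k Set.univ ≤ 0 →
        lpProd C1 lp1 C2 lp2 F1 F2 (fun p => g p.1 * k p.2) Set.univ =
          (((-natExtLP C1 lp1 (-g) Set.univ).toReal *
            (natExtLP C2 lp2 k Set.univ).toReal : ℝ) : EReal)) := by
  have hD1 := coherentSDG_ElpSet hC1 hlp1
  rw [lpProd_mul_univ hC1 hlp1 hC2 hlp2 F1 F2 hk hg hgm, natExtLP_univ hC2 hlp2 hk,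
    EReal.toReal_coe, natExtLP_univ hC1 hlp1 (hg.mul (isGamble_const _)),
    natExtLP_univ hC1 hlp1 hg, natExtLP_univ hC1 hlp1 hg.neg, EReal.toReal_coe, ← EReal.coe_neg,
    EReal.toReal_coe, EReal.coe_nonneg, EReal.coe_nonpos]
  exact ⟨rfl, fun hμ => by rw [lowerPrev_mul_const_of_nonneg hD1 g hμ],
    fun hμ => by rw [lowerPrev_mul_const_of_nonpos hD1 g hμ]⟩

end Factorisation

theorem stmt15_general {X1 X2 : Type*} [Nonempty X1] [Nonempty X2]
    (C1 : Set ((X1 → ℝ) × Set X1)) (hC1 : C1 ⊆ domC X1)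
    (lp1 : (X1 → ℝ) → Set X1 → EReal) (hlp1 : Coherent C1 lp1)
    (C2 : Set ((X2 → ℝ) × Set X2)) (hC2 : C2 ⊆ domC X2)
    (lp2 : (X2 → ℝ) → Set X2 → EReal) (hlp2 : Coherent C2 lp2)
    (F1 : Set (Set X1)) (F2 : Set (Set X2)) :
    (∀ (g : X1 → ℝ) (k : X2 → ℝ), IsGamble k → IsGamble g → 0 ≤ g → BMeas F1 g →
      lpProd C1 lp1 C2 lp2 F1 F2 (fun p => g p.1 * k p.2) Set.univ =
        natExtLP C1 lp1 (fun x1 => g x1 * (natExtLP C2 lp2 k Set.univ).toReal) Set.univ ∧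
      (0 ≤ natExtLP C2 lp2 k Set.univ →
        lpProd C1 lp1 C2 lp2 F1 F2 (fun p => g p.1 * k p.2) Set.univ =
          (((natExtLP C1 lp1 g Set.univ).toReal *
            (natExtLP C2 lp2 k Set.univ).toReal : ℝ) : EReal)) ∧
      (natExtLP C2 lp2 k Set.univ ≤ 0 →
        lpProd C1 lp1 C2 lp2 F1 F2 (fun p => g p.1 * k p.2) Set.univ =
          (((-natExtLP C1 lp1 (-g) Set.univ).toReal *
            (natExtLP C2 lp2 k Set.univ).toReal : ℝ) : EReal))) ∧
    (∀ (g : X2 → ℝ) (k : X1 → ℝ), IsGamble k → IsGamble g → 0 ≤ g → BMeas F2 g →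
      lpProd C1 lp1 C2 lp2 F1 F2 (fun p => g p.2 * k p.1) Set.univ =
        natExtLP C2 lp2 (fun x2 => g x2 * (natExtLP C1 lp1 k Set.univ).toReal) Set.univ ∧
      (0 ≤ natExtLP C1 lp1 k Set.univ →
        lpProd C1 lp1 C2 lp2 F1 F2 (fun p => g p.2 * k p.1) Set.univ =
          (((natExtLP C2 lp2 g Set.univ).toReal *
            (natExtLP C1 lp1 k Set.univ).toReal : ℝ) : EReal)) ∧
      (natExtLP C1 lp1 k Set.univ ≤ 0 →
        lpProd C1 lp1 C2 lp2 F1 F2 (fun p => g p.2 * k p.1) Set.univ =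
          (((-natExtLP C2 lp2 (-g) Set.univ).toReal *
            (natExtLP C1 lp1 k Set.univ).toReal : ℝ) : EReal))) := by
  refine ⟨fun g k hk hg _ hgm =>
    lpProd_mul_factorisation hC1 hlp1 hC2 hlp2 F1 F2 hk hg hgm, fun g k hk hg _ hgm => ?_⟩
  rw [← lpProd_comp_swap]
  exact lpProd_mul_factorisation hC2 hlp2 hC1 hlp1 F2 F1 hk hg hgm

/-- Corollary 6, Factorisation: the independent natural extension
factorises over measurable nonnegative `g`. -/
theorem stmt15 {X1 X2 : Type*} [Nonempty X1] [Nonempty X2]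
    (C1 : Set ((X1 → ℝ) × Set X1)) (hC1 : C1 ⊆ domC X1)
    (lp1 : (X1 → ℝ) → Set X1 → EReal) (hlp1 : Coherent C1 lp1)
    (C2 : Set ((X2 → ℝ) × Set X2)) (hC2 : C2 ⊆ domC X2)
    (lp2 : (X2 → ℝ) → Set X2 → EReal) (hlp2 : Coherent C2 lp2)
    (F1 : Set (Set X1)) (F2 : Set (Set X2))
    (hF1 : ∀ A ∈ F1, A.Nonempty) (hF2 : ∀ A ∈ F2, A.Nonempty) :
    (∀ (g : X1 → ℝ) (k : X2 → ℝ), IsGamble k → IsGamble g → 0 ≤ g → BMeas F1 g →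
      lpProd C1 lp1 C2 lp2 F1 F2 (fun p => g p.1 * k p.2) Set.univ =
        natExtLP C1 lp1 (fun x1 => g x1 * (natExtLP C2 lp2 k Set.univ).toReal) Set.univ ∧
      (0 ≤ natExtLP C2 lp2 k Set.univ →
        lpProd C1 lp1 C2 lp2 F1 F2 (fun p => g p.1 * k p.2) Set.univ =
          (((natExtLP C1 lp1 g Set.univ).toReal *
            (natExtLP C2 lp2 k Set.univ).toReal : ℝ) : EReal)) ∧
      (natExtLP C2 lp2 k Set.univ ≤ 0 →
        lpProd C1 lp1 C2 lp2 F1 F2 (fun p => g p.1 * k p.2) Set.univ =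
          (((-natExtLP C1 lp1 (-g) Set.univ).toReal *
            (natExtLP C2 lp2 k Set.univ).toReal : ℝ) : EReal))) ∧
    (∀ (g : X2 → ℝ) (k : X1 → ℝ), IsGamble k → IsGamble g → 0 ≤ g → BMeas F2 g →
      lpProd C1 lp1 C2 lp2 F1 F2 (fun p => g p.2 * k p.1) Set.univ =
        natExtLP C2 lp2 (fun x2 => g x2 * (natExtLP C1 lp1 k Set.univ).toReal) Set.univ ∧
      (0 ≤ natExtLP C1 lp1 k Set.univ →
        lpProd C1 lp1 C2 lp2 F1 F2 (fun p => g p.2 * k p.1) Set.univ =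
          (((natExtLP C2 lp2 g Set.univ).toReal *
            (natExtLP C1 lp1 k Set.univ).toReal : ℝ) : EReal)) ∧
      (natExtLP C1 lp1 k Set.univ ≤ 0 →
        lpProd C1 lp1 C2 lp2 F1 F2 (fun p => g p.2 * k p.1) Set.univ =
          (((-natExtLP C2 lp2 (-g) Set.univ).toReal *
            (natExtLP C1 lp1 k Set.univ).toReal : ℝ) : EReal))) :=
  stmt15_general C1 hC1 lp1 hlp1 C2 hC2 lp2 hlp2 F1 F2

end IPaper
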